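/- arXiv:1409.2440 — 3 statements merged into one kernel-verified Lean document; each statement's English description precedes it below -/
import Mathlib

section
/- Let F be a 2-regular spanning subgraph (a 2-factor, possibly with 2-cycles/doubled edges) of a cubic graph G, and let h be a hexagonal face of G such that exactly three pairwise non-adjacent edges of the boundary cycle C_h of h belong to F and these three edges lie on three distinct cycles of F. Then the symmetric difference F' = F Δ C_h is again a 2-regular spanning subgraph of G, and the number of connected components of F' is exactly two less than that of F. -/
open SimpleGraph

def Sym2.NoCommonVertex {V : Type} (e f : Sym2 V) : Prop := ∀ v : V, v ∈ e → v ∉ f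

/-!
The three `F`-edges of the hexagon are pairwise disjoint, so they cover all six of its vertices:
each hexagon vertex loses exactly one `F`-edge and gains exactly one hexagon edge, and `F ∆ C`
is again 2-regular.

Deleting an edge of a cycle of `F` leaves its endpoints joined by the rest of that cycle. As the
three `F`-edges of the hexagon lie on different cycles of `F`, these detours avoid the switched
edges, so every component of `F` stays connected in `F ∆ C`. Conversely, `F ∆ C` only adds
edges between vertices of the three cycles met by the hexagon, and it joins all of them along the
hexagon. Hence exactly these three components merge into one and all others are untouched.
-/

open scoped symmDiff

theorem Set.ncard_symmDiff_pair {α : Type*} {A : Set α} {p q : α} (hA : A.Finite) (hp : p ∈ A)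
    (hq : q ∉ A) : (A ∆ {p, q}).ncard = A.ncard := by
  have hpq : p ≠ q := fun h => hq (h ▸ hp)
  have : A ∆ {p, q} = insert q (A \ {p}) := by
    ext x
    simp only [Set.mem_symmDiff, Set.mem_insert_iff, Set.mem_singleton_iff, Set.mem_sdiff]
    grind
  rw [this, Set.ncard_insert_of_notMem (by simp [hq]) hA.sdiff,
    Set.ncard_sdiff_singleton_add_one hp hA]

theorem Function.Surjective.natCard_add_ncard_eq {α β : Type*} [Finite α] {g : α → β}
    (hg : g.Surjective) {K : Set α} (hK : K.Nonempty)
    (hfib : ∀ a b, g a = g b ↔ a = b ∨ a ∈ K ∧ b ∈ K) :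
    Nat.card β + K.ncard = Nat.card α + 1 := by
  obtain ⟨k, hk⟩ := hK
  have hinj : (insert k Kᶜ).InjOn g := by
    intro a ha b hb hab
    simp only [Set.mem_insert_iff, Set.mem_compl_iff] at ha hb
    grind
  have himage : g '' (insert k Kᶜ) = Set.univ := by
    refine Set.eq_univ_of_forall fun b => ?_
    obtain ⟨a, rfl⟩ := hg b
    by_cases ha : a ∈ K
    · exact ⟨k, Set.mem_insert _ _, (hfib k a).mpr (Or.inr ⟨hk, ha⟩)⟩
    · exact ⟨a, Set.mem_insert_of_mem _ ha, rfl⟩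
  have hcard := hinj.ncard_image
  rw [himage, Set.ncard_univ, Set.ncard_insert_of_notMem (by simpa using hk)] at hcard
  have := Set.ncard_add_ncard_compl K
  omega

namespace SimpleGraph

variable {V : Type*}

theorem Reachable.of_forall_adj {G G' : SimpleGraph V}
    (h : ∀ ⦃u v⦄, G.Adj u v → G'.Reachable u v) {u v : V} (huv : G.Reachable u v) :
    G'.Reachable u v := by
  rw [reachable_iff_reflTransGen] at huv ⊢
  exact huv.lift' id fun a b hab => (reachable_iff_reflTransGen a b).mp (h hab)

variable {F H : SimpleGraph V}

theorem neighborSet_symmDiff (v : V) :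
    (F ∆ H).neighborSet v = F.neighborSet v ∆ H.neighborSet v := by
  ext
  simp [symmDiff_def]

theorem IsAlternating.ncard_neighborSet_symmDiff [Finite V] (hH : H.IsCycles)
    (halt : H.IsAlternating F) (v : V) :
    ((F ∆ H).neighborSet v).ncard = (F.neighborSet v).ncard := by
  rw [neighborSet_symmDiff]
  obtain hv | hv := (H.neighborSet v).eq_empty_or_nonempty
  · rw [hv, ← Set.bot_eq_empty, symmDiff_bot]
  obtain ⟨p, q, hpq, hpq'⟩ := Set.ncard_eq_two.mp (hH hv)
  have hp : H.Adj v p := show p ∈ H.neighborSet v by simp [hpq']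
  have hq : H.Adj v q := show q ∈ H.neighborSet v by simp [hpq']
  have hFpq := halt hpq hp hq
  rw [hpq']
  by_cases hFp : F.Adj v p
  · exact Set.ncard_symmDiff_pair (Set.toFinite _) hFp (hFpq.mp hFp)
  · rw [Set.pair_comm]
    exact Set.ncard_symmDiff_pair (Set.toFinite _) (by tauto) hFp

theorem reachable_symmDiff_of_adj [Finite V] (hF : F.IsCycles)
    (hsep : ∀ ⦃x y x' y'⦄, F.Adj x y → H.Adj x y → F.Adj x' y' → H.Adj x' y' →
      F.connectedComponentMk x = F.connectedComponentMk x' → s(x, y) = s(x', y'))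
    {x y : V} (hxy : F.Adj x y) : (F ∆ H).Reachable x y := by
  classical
  by_cases hHxy : H.Adj x y
  swap
  · exact Adj.reachable (by simp [symmDiff_def, hxy, hHxy])
  obtain ⟨p⟩ := hF.reachable_deleteEdges hxy
  refine (p.transfer (F ∆ H) fun e he => ?_).reachable
  induction e using Sym2.ind with | _ a b =>
  have hab := p.edges_subset_edgeSet he
  rw [edgeSet_deleteEdges, Set.mem_sdiff, mem_edgeSet, Set.mem_singleton_iff] at hab
  have hxa : F.Reachable x a :=
    (p.takeUntil a (p.fst_mem_support_of_mem_edges he)).reachable.mono (deleteEdges_le _)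
  have hHab : ¬ H.Adj a b := fun h =>
    hab.2 (hsep hab.1 h hxy hHxy (ConnectedComponent.sound hxa.symm))
  simp [symmDiff_def, hab.1, hHab]

theorem connectedComponentMk_eq_or_mem_of_reachable_symmDiff {K : Set F.ConnectedComponent}
    (hK : ∀ ⦃x y⦄, H.Adj x y → F.connectedComponentMk x ∈ K) {u v : V}
    (h : (F ∆ H).Reachable u v) :
    F.connectedComponentMk u = F.connectedComponentMk v ∨
      F.connectedComponentMk u ∈ K ∧ F.connectedComponentMk v ∈ K := by
  have hstep : ∀ ⦃x y⦄, (F ∆ H).Adj x y →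
      F.connectedComponentMk x = F.connectedComponentMk y ∨
        F.connectedComponentMk x ∈ K ∧ F.connectedComponentMk y ∈ K := by
    rintro x y (⟨hF, -⟩ | ⟨hH, -⟩)
    · exact Or.inl (ConnectedComponent.connectedComponentMk_eq_of_adj hF)
    · exact Or.inr ⟨hK hH, hK hH.symm⟩
  obtain ⟨p⟩ := h
  induction p with
  | nil => exact Or.inl rfl
  | cons hadj _ ih => grind [hstep hadj]

theorem card_connectedComponent_symmDiff_add_ncard [Finite V] {K : Set F.ConnectedComponent}
    (hKne : K.Nonempty) (hfwd : ∀ ⦃u v⦄, F.Adj u v → (F ∆ H).Reachable u v)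
    (hK : ∀ ⦃x y⦄, H.Adj x y → F.connectedComponentMk x ∈ K)
    (hmerge : ∀ ⦃u v⦄, F.connectedComponentMk u ∈ K → F.connectedComponentMk v ∈ K →
      (F ∆ H).Reachable u v) :
    Nat.card (F ∆ H).ConnectedComponent + K.ncard = Nat.card F.ConnectedComponent + 1 := by
  let g : F.ConnectedComponent → (F ∆ H).ConnectedComponent :=
    ConnectedComponent.lift (F ∆ H).connectedComponentMk fun _ _ p _ =>
      ConnectedComponent.sound (Reachable.of_forall_adj hfwd p.reachable)
  refine Function.Surjective.natCard_add_ncard_eq (g := g) ?_ hKne ?_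
  · rintro ⟨v⟩
    exact ⟨F.connectedComponentMk v, rfl⟩
  · rintro ⟨u⟩ ⟨v⟩
    change (F ∆ H).connectedComponentMk u = (F ∆ H).connectedComponentMk v ↔ _
    rw [ConnectedComponent.eq]
    refine ⟨connectedComponentMk_eq_or_mem_of_reachable_symmDiff hK, ?_⟩
    rintro (h | ⟨hu, hv⟩)
    · exact Reachable.of_forall_adj hfwd (ConnectedComponent.exact h)
    · exact hmerge hu hv

theorem Walk.reachable_of_mem_support_of_forall_mem_edges {G G' : SimpleGraph V} {u v : V}
    (p : G.Walk u v) (h : ∀ ⦃x y⦄, s(x, y) ∈ p.edges → G'.Reachable x y) {x : V}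
    (hx : x ∈ p.support) : G'.Reachable u x := by
  induction p with
  | nil => simp_all
  | cons hadj p ih =>
    rw [support_cons, List.mem_cons] at hx
    obtain rfl | hx := hx
    · rfl
    · exact (h (by simp)).trans (ih (fun x y hxy => h (by simp [hxy])) hx)

theorem Walk.mem_support_of_mem_of_mem_edges {G : SimpleGraph V} {u v x : V} (p : G.Walk u v)
    {e : Sym2 V} (he : e ∈ p.edges) (hx : x ∈ e) : x ∈ p.support := by
  obtain ⟨y, rfl⟩ := Sym2.mem_iff_exists.mp hx
  exact p.fst_mem_support_of_mem_edges he

theorem Walk.fromEdgeSet_edgeSet_adj {G : SimpleGraph V} {u v : V} (p : G.Walk u v) {x y : V} :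
    (fromEdgeSet p.edgeSet).Adj x y ↔ s(x, y) ∈ p.edges := by
  rw [fromEdgeSet_adj, Walk.mem_edgeSet, and_iff_left_iff_imp]
  exact fun h => G.ne_of_adj (p.edges_subset_edgeSet h)

theorem Walk.fromEdgeSet_edgeSet_eq_toSubgraph_spanningCoe {G : SimpleGraph V} {u v : V}
    (p : G.Walk u v) :
    fromEdgeSet p.edgeSet = p.toSubgraph.spanningCoe := by
  ext x y
  rw [fromEdgeSet_edgeSet_adj, Subgraph.spanningCoe_adj, ← Subgraph.mem_edgeSet,
    edgeSet_toSubgraph, Walk.mem_edgeSet]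

theorem Walk.fromEdgeSet_edgeSet_le {G : SimpleGraph V} {u v : V} (p : G.Walk u v) :
    fromEdgeSet p.edgeSet ≤ G :=
  (fromEdgeSet_le G).mpr fun _ he => p.edges_subset_edgeSet he.1

theorem ConnectedComponent.connectedComponentMk_eq_of_mem_edgeSet {G : SimpleGraph V}
    {e : Sym2 V} (he : e ∈ G.edgeSet) {x y : V} (hx : x ∈ e) (hy : y ∈ e) :
    G.connectedComponentMk x = G.connectedComponentMk y := by
  obtain ⟨z, rfl⟩ := Sym2.mem_iff_exists.mp hx
  rcases Sym2.mem_iff.mp hy with rfl | rfl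
  · rfl
  · exact connectedComponentMk_eq_of_adj he

namespace Walk.IsCycle

variable {G F : SimpleGraph V} {a : V} {w : G.Walk a a} {M : Finset (Sym2 V)}

theorem isCycles_fromEdgeSet_edgeSet (hw : w.IsCycle) : (fromEdgeSet w.edgeSet).IsCycles :=
  w.fromEdgeSet_edgeSet_eq_toSubgraph_spanningCoe ▸ hw.isCycles_spanningCoe_toSubgraph

theorem card_support_toFinset [DecidableEq V] (hw : w.IsCycle) :
    w.support.toFinset.card = w.length := by
  rw [← w.cons_tail_support, List.toFinset_cons,
    Finset.insert_eq_of_mem (List.mem_toFinset.mpr (end_mem_tail_support hw.not_nil)),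
    List.toFinset_card_of_nodup hw.support_nodup, List.length_tail, length_support]
  omega

theorem exists_mem_of_two_mul_card_eq (hw : w.IsCycle)
    (hMw : ∀ e ∈ M, e ∈ w.edges)
    (hdisj : ∀ e ∈ M, ∀ e' ∈ M, ∀ x ∈ e, x ∈ e' → e = e')
    (hcard : 2 * M.card = w.length) {x : V} (hx : x ∈ w.support) : ∃ e ∈ M, x ∈ e := by
  classical
  have hsub : M.biUnion Sym2.toFinset ⊆ w.support.toFinset := by
    intro y hy
    obtain ⟨e, he, hye⟩ := Finset.mem_biUnion.mp hy
    exact List.mem_toFinset.mpr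
      (w.mem_support_of_mem_of_mem_edges (hMw e he) (Sym2.mem_toFinset.mp hye))
  have hcardU : (M.biUnion Sym2.toFinset).card = 2 * M.card := by
    rw [Finset.card_biUnion, Finset.sum_congr rfl fun e he => Sym2.card_toFinset_of_not_isDiag e
      (G.not_isDiag_of_mem_edgeSet (w.edges_subset_edgeSet (hMw e he))), Finset.sum_const,
      smul_eq_mul, mul_comm]
    intro e he e' he' hne
    rw [Function.onFun, Finset.disjoint_left]
    intro y hy hy'
    exact hne (hdisj e he e' he' y (Sym2.mem_toFinset.mp hy) (Sym2.mem_toFinset.mp hy'))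
  have hU := Finset.eq_of_subset_of_card_le hsub (by rw [hcardU, hcard, hw.card_support_toFinset])
  have hxU : x ∈ M.biUnion Sym2.toFinset := hU ▸ List.mem_toFinset.mpr hx
  simpa using hxU

theorem isAlternating (hw : w.IsCycle)
    (hdisj : ∀ e ∈ w.edges, ∀ e' ∈ w.edges, e ∈ F.edgeSet → e' ∈ F.edgeSet →
      ∀ x ∈ e, x ∈ e' → e = e')
    (hcover : ∀ x ∈ w.support, ∃ e ∈ w.edges, e ∈ F.edgeSet ∧ x ∈ e) :
    (fromEdgeSet w.edgeSet).IsAlternating F := by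
  intro v y y' hyy' hy hy'
  have hHy := hy
  rw [fromEdgeSet_edgeSet_adj] at hy hy'
  constructor
  · intro hFy hFy'
    exact hyy' (Sym2.congr_right.mp
      (hdisj _ hy _ hy' hFy hFy' v (Sym2.mem_mk_left _ _) (Sym2.mem_mk_left _ _)))
  · intro hFy'
    obtain ⟨e, he, heF, hve⟩ := hcover v (w.fst_mem_support_of_mem_edges hy)
    obtain ⟨z, rfl⟩ := Sym2.mem_iff_exists.mp hve
    by_contra hFy
    have hzy : y ≠ z := fun h => hFy (h ▸ heF)
    have hzy' : z = y' :=
      (hw.isCycles_fromEdgeSet_edgeSet.existsUnique_ne_adj hHy).unique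
        ⟨hzy, w.fromEdgeSet_edgeSet_adj.mpr he⟩ ⟨hyy', w.fromEdgeSet_edgeSet_adj.mpr hy'⟩
    exact hFy' (hzy' ▸ heF)

theorem ncard_neighborSet_symmDiff [Finite V] (hw : w.IsCycle)
    (hM : ∀ e, e ∈ M ↔ e ∈ w.edges ∧ e ∈ F.edgeSet)
    (hsep : ∀ e ∈ M, ∀ e' ∈ M, ∀ x ∈ e, ∀ y ∈ e',
      F.connectedComponentMk x = F.connectedComponentMk y → e = e')
    (hcard : 2 * M.card = w.length) (v : V) :
    ((F ∆ fromEdgeSet w.edgeSet).neighborSet v).ncard = (F.neighborSet v).ncard := by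
  refine IsAlternating.ncard_neighborSet_symmDiff hw.isCycles_fromEdgeSet_edgeSet
    (hw.isAlternating (fun e he e' he' hF hF' x hx hx' => ?_) fun x hx => ?_) v
  · exact hsep e ((hM e).mpr ⟨he, hF⟩) e' ((hM e').mpr ⟨he', hF'⟩) x hx x hx' rfl
  · obtain ⟨e, he, hxe⟩ := hw.exists_mem_of_two_mul_card_eq (fun e he => ((hM e).mp he).1)
      (fun e he e' he' y hy hy' => hsep e he e' he' y hy y hy' rfl) hcard hx
    exact ⟨e, ((hM e).mp he).1, ((hM e).mp he).2, hxe⟩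

theorem ncard_image_connectedComponentMk_support (hw : w.IsCycle)
    (hM : ∀ e, e ∈ M ↔ e ∈ w.edges ∧ e ∈ F.edgeSet)
    (hsep : ∀ e ∈ M, ∀ e' ∈ M, ∀ x ∈ e, ∀ y ∈ e',
      F.connectedComponentMk x = F.connectedComponentMk y → e = e')
    (hcard : 2 * M.card = w.length) :
    (F.connectedComponentMk '' {x | x ∈ w.support}).ncard = M.card := by
  have himage : F.connectedComponentMk '' {x | x ∈ w.support} =
      (fun e : Sym2 V => F.connectedComponentMk e.out.1) '' M := by
    ext c
    constructor
    · rintro ⟨x, hx, rfl⟩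
      obtain ⟨e, he, hxe⟩ := hw.exists_mem_of_two_mul_card_eq (fun e he => ((hM e).mp he).1)
        (fun e he e' he' y hy hy' => hsep e he e' he' y hy y hy' rfl) hcard hx
      exact ⟨e, he, ConnectedComponent.connectedComponentMk_eq_of_mem_edgeSet ((hM e).mp he).2
        (Sym2.out_fst_mem e) hxe⟩
    · rintro ⟨e, he, rfl⟩
      exact ⟨_, w.mem_support_of_mem_of_mem_edges ((hM e).mp he).1 (Sym2.out_fst_mem e), rfl⟩
  rw [himage, ← Set.ncard_coe_finset M]
  exact Set.InjOn.ncard_image fun e he e' he' h =>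
    hsep e he e' he' _ (Sym2.out_fst_mem e) _ (Sym2.out_fst_mem e') h

theorem card_connectedComponent_symmDiff_add_card [Finite V] (hF : F.IsCycles)
    (hw : w.IsCycle) (hM : ∀ e, e ∈ M ↔ e ∈ w.edges ∧ e ∈ F.edgeSet)
    (hsep : ∀ e ∈ M, ∀ e' ∈ M, ∀ x ∈ e, ∀ y ∈ e',
      F.connectedComponentMk x = F.connectedComponentMk y → e = e')
    (hcard : 2 * M.card = w.length) :
    Nat.card (F ∆ fromEdgeSet w.edgeSet).ConnectedComponent + M.card =
      Nat.card F.ConnectedComponent + 1 := by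
  set H := fromEdgeSet w.edgeSet
  have hMadj : ∀ ⦃x y⦄, F.Adj x y → H.Adj x y → s(x, y) ∈ M :=
    fun _ _ hF hH => (hM _).mpr ⟨w.fromEdgeSet_edgeSet_adj.mp hH, hF⟩
  have hfwd : ∀ ⦃u v⦄, F.Adj u v → (F ∆ H).Reachable u v := fun _ _ =>
    reachable_symmDiff_of_adj hF fun x _ x' _ hF hH hF' hH' =>
      hsep _ (hMadj hF hH) _ (hMadj hF' hH') x (Sym2.mem_mk_left _ _) x' (Sym2.mem_mk_left _ _)
  have hcycle : ∀ x ∈ w.support, (F ∆ H).Reachable a x :=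
    fun _ => w.reachable_of_mem_support_of_forall_mem_edges fun x y hxy => by
      by_cases hFxy : F.Adj x y
      · exact hfwd hFxy
      · exact Adj.reachable (Or.inr ⟨w.fromEdgeSet_edgeSet_adj.mpr hxy, hFxy⟩)
  rw [← hw.ncard_image_connectedComponentMk_support hM hsep hcard]
  refine card_connectedComponent_symmDiff_add_ncard ⟨_, a, w.start_mem_support, rfl⟩ hfwd
    (fun x _ hxy => ⟨x, w.fst_mem_support_of_mem_edges (w.fromEdgeSet_edgeSet_adj.mp hxy), rfl⟩)
    ?_
  rintro u v ⟨x, hx, hxu⟩ ⟨y, hy, hyv⟩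
  have hux := (Reachable.of_forall_adj hfwd (ConnectedComponent.exact hxu)).symm
  have hyv := Reachable.of_forall_adj hfwd (ConnectedComponent.exact hyv)
  exact hux.trans (((hcycle x hx).symm.trans (hcycle y hy)).trans hyv)

end Walk.IsCycle

end SimpleGraph

theorem resonant_hexagon_switch_general {V : Type} [Fintype V] [DecidableEq V]
    (G : SimpleGraph V)
    (F : SimpleGraph V) (hFG : F ≤ G)
    (hF2 : ∀ v, (F.neighborSet v).ncard = 2)
    (a : V) (w : G.Walk a a) (hw : w.IsCycle) (hw6 : w.length = 6)
    (e1 e2 e3 : Sym2 V)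
    (he1 : e1 ∈ w.edges ∧ e1 ∈ F.edgeSet)
    (he2 : e2 ∈ w.edges ∧ e2 ∈ F.edgeSet)
    (he3 : e3 ∈ w.edges ∧ e3 ∈ F.edgeSet)
    (hdist : e1 ≠ e2 ∧ e1 ≠ e3 ∧ e2 ≠ e3)
    (honly : ∀ e ∈ w.edges, e ∈ F.edgeSet → e = e1 ∨ e = e2 ∨ e = e3)
    (hcomp : ∀ x y : V, x ∈ e1 → (y ∈ e2 ∨ y ∈ e3) →
        F.connectedComponentMk x ≠ F.connectedComponentMk y)
    (hcomp' : ∀ x y : V, x ∈ e2 → y ∈ e3 →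
        F.connectedComponentMk x ≠ F.connectedComponentMk y) :
    (∀ v, (((symmDiff F (SimpleGraph.fromEdgeSet {e | e ∈ w.edges})).neighborSet v).ncard = 2)) ∧
      symmDiff F (SimpleGraph.fromEdgeSet {e | e ∈ w.edges}) ≤ G ∧
      Nat.card (symmDiff F (SimpleGraph.fromEdgeSet {e | e ∈ w.edges})).ConnectedComponent =
        Nat.card F.ConnectedComponent - 2 := by
  set M : Finset (Sym2 V) := {e1, e2, e3}
  have hM : ∀ e, e ∈ M ↔ e ∈ w.edges ∧ e ∈ F.edgeSet := by
    intro e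
    simp only [M, Finset.mem_insert, Finset.mem_singleton]
    exact ⟨by rintro (rfl | rfl | rfl) <;> assumption, fun he => honly e he.1 he.2⟩
  have hsep : ∀ e ∈ M, ∀ e' ∈ M, ∀ x ∈ e, ∀ y ∈ e',
      F.connectedComponentMk x = F.connectedComponentMk y → e = e' := by
    simp only [M, Finset.mem_insert, Finset.mem_singleton]
    grind
  have hM3 : M.card = 3 :=
    Finset.card_eq_three.mpr ⟨e1, e2, e3, hdist.1, hdist.2.1, hdist.2.2, rfl⟩
  have hlen : 2 * M.card = w.length := by rw [hM3, hw6]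
  refine ⟨fun v => (hw.ncard_neighborSet_symmDiff hM hsep hlen v).trans (hF2 v),
    symmDiff_le_sup.trans (sup_le hFG w.fromEdgeSet_edgeSet_le), ?_⟩
  change Nat.card (F ∆ fromEdgeSet w.edgeSet).ConnectedComponent = _
  have := hw.card_connectedComponent_symmDiff_add_card (fun v _ => hF2 v) hM hsep hlen
  omega

/-- Let `F` be a 2-regular spanning subgraph (2-factor) of a cubic graph `G` and
let `h` be a hexagonal face of `G` such that exactly three pairwise non-adjacent
edges of its boundary 6-cycle `C` belong to `F`, lying on three distinct cycles
of `F`. Then the symmetric difference `F ∆ C` is again a 2-regular spanning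
subgraph of `G`, and its number of connected components is exactly two less than
that of `F`. -/
theorem resonant_hexagon_switch {V : Type} [Fintype V] [DecidableEq V]
    (G : SimpleGraph V) (hcubic : ∀ v, (G.neighborSet v).ncard = 3)
    (F : SimpleGraph V) (hFG : F ≤ G)
    (hF2 : ∀ v, (F.neighborSet v).ncard = 2)
    (a : V) (w : G.Walk a a) (hw : w.IsCycle) (hw6 : w.length = 6)
    (e1 e2 e3 : Sym2 V)
    (he1 : e1 ∈ w.edges ∧ e1 ∈ F.edgeSet)
    (he2 : e2 ∈ w.edges ∧ e2 ∈ F.edgeSet)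
    (he3 : e3 ∈ w.edges ∧ e3 ∈ F.edgeSet)
    (hdist : e1 ≠ e2 ∧ e1 ≠ e3 ∧ e2 ≠ e3)
    (honly : ∀ e ∈ w.edges, e ∈ F.edgeSet → e = e1 ∨ e = e2 ∨ e = e3)
    (hnonadj : Sym2.NoCommonVertex e1 e2 ∧ Sym2.NoCommonVertex e1 e3 ∧
      Sym2.NoCommonVertex e2 e3)
    (hcomp : ∀ x y : V, x ∈ e1 → (y ∈ e2 ∨ y ∈ e3) →
        F.connectedComponentMk x ≠ F.connectedComponentMk y)
    (hcomp' : ∀ x y : V, x ∈ e2 → y ∈ e3 →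
        F.connectedComponentMk x ≠ F.connectedComponentMk y) :
    (∀ v, (((symmDiff F (SimpleGraph.fromEdgeSet {e | e ∈ w.edges})).neighborSet v).ncard = 2)) ∧
      symmDiff F (SimpleGraph.fromEdgeSet {e | e ∈ w.edges}) ≤ G ∧
      Nat.card (symmDiff F (SimpleGraph.fromEdgeSet {e | e ∈ w.edges})).ConnectedComponent =
        Nat.card F.ConnectedComponent - 2 :=
  resonant_hexagon_switch_general G F hFG hF2 a w hw hw6 e1 e2 e3 he1 he2 he3 hdist honly hcomp
    hcomp'
end

section
/- Let G be a planar cubic graph with faces of size at most 6, with f5 pentagons and f6 hexagons, and let F be a 2-factor of G as produced by the coloring construction, with x4 grey quadrangles, c cycles, and q ×-paths (each ×-path starts and ends at a white pentagon, so the number of grey pentagons is x5 = f5 - 2q). Then f6 + f5 + x4 + q + c ≡ 0 (mod 2). -/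
/-- Parity lemma for 2-factors of planar cubic graphs with faces of size at
most 6: if `n = 8 + f5 + 2·f6` (Euler's formula), the cycles of the 2-factor
cover all vertices, so `n = 2c + 2·x4 + 3·x5 + 4·x6`, and each of the `q`
×-paths starts and ends in a white pentagon, so the number of grey pentagons is
`x5 = f5 - 2q`, then `f6 + f5 + x4 + q + c ≡ 0 (mod 2)`. -/
theorem parity_of_two_factor
    (n f5 f6 x4 x5 x6 c q : ℕ)
    (heuler : n = 8 + f5 + 2 * f6)
    (hcover : n = 2 * c + 2 * x4 + 3 * x5 + 4 * x6)
    (hgrey : x5 = f5 - 2 * q) (hq : 2 * q ≤ f5) :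
    (f6 + f5 + x4 + q + c) % 2 = 0 := by
  have h5 : f5 = x5 + 2 * q := by omega
  omega
end

section
/- Let G be a 3-connected planar cubic graph containing three quadrangular faces f1, f2, f3 pairwise adjacent around a common structure (f1 and f2 sharing edge v1v2, f3 adjacent to both along u3w3), with the fourth surrounding face of size at least 5. Let G2 be obtained by collapsing the union of f1, f2, f3 to a single vertex. Then every Hamiltonian cycle of G2 extends to a Hamiltonian cycle of G. -/
open SimpleGraph

/-- A combinatorial plane graph: a graph together with a set of faces, each face
being a set of boundary edges, such that every edge lies on exactly two faces, and
Euler's formula holds (our combinatorial proxy for a planar embedding). -/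
structure PlaneGraph (V : Type) [Fintype V] [DecidableEq V] where
  G : SimpleGraph V
  F : Type
  [fintypeF : Fintype F]
  sides : F → Set (Sym2 V)
  sides_sub : ∀ f, sides f ⊆ G.edgeSet
  two_faces : ∀ e ∈ G.edgeSet, Set.ncard {f | e ∈ sides f} = 2
  euler : Fintype.card V + Fintype.card F = G.edgeSet.ncard + 2

namespace PlaneGraph

variable {V : Type} [Fintype V] [DecidableEq V]

/-- The size of a face: the number of edges on its boundary. -/
noncomputable def size (P : PlaneGraph V) (f : P.F) : ℕ := (P.sides f).ncard

/-- Two faces are adjacent if they are distinct and share an edge. -/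
def FaceAdj (P : PlaneGraph V) (f g : P.F) : Prop :=
  f ≠ g ∧ (P.sides f ∩ P.sides g).Nonempty

/-- The graph is cubic (3-regular). -/
def Cubic (P : PlaneGraph V) : Prop := ∀ v, (P.G.neighborSet v).ncard = 3

end PlaneGraph

/-- A graph is `k`-connected if it has more than `k` vertices and removing
fewer than `k` vertices always leaves a connected graph. -/
def SimpleGraph.KConnected {V : Type} (G : SimpleGraph V) [Fintype V] (k : ℕ) : Prop :=
  k < Fintype.card V ∧
    ∀ s : Set V, s.ncard < k → ((G.induce (sᶜ : Set V)).Connected)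

/-!
Among the seven vertices of the three quadrangles, `v1, v2, u3, w3` have all three neighbours
inside the configuration, and each of `u4, w4, t` has at most one neighbour outside it.
A Hamiltonian cycle of the contracted graph leaves the contracted vertex towards two distinct
vertices, so in `G` these are joined to two distinct attachment vertices among `u4, w4, t`.
Any two attachment vertices are the ends of a path through all seven vertices, and putting this
path in place of the contracted vertex gives a Hamiltonian cycle of `G`.
-/

namespace SimpleGraph

variable {V W : Type*} {G : SimpleGraph V}

theorem neighborSet_eq_of_ncard_eq_three {v a b c : V} (hv : (G.neighborSet v).ncard = 3)
    (ha : G.Adj v a) (hb : G.Adj v b) (hc : G.Adj v c) (hab : a ≠ b) (hac : a ≠ c)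
    (hbc : b ≠ c) : G.neighborSet v = {a, b, c} :=
  (Set.eq_of_subset_of_ncard_le (by simp [Set.insert_subset_iff, ha, hb, hc])
    (by rw [hv, Set.ncard_eq_three.mpr ⟨a, b, c, hab, hac, hbc, rfl⟩])
    (Set.finite_of_ncard_pos (by omega))).symm

theorem mem_of_adj_of_ncard_neighborSet_eq_three {S : Set V} {v a b c x : V}
    (hv : (G.neighborSet v).ncard = 3) (ha : G.Adj v a) (hb : G.Adj v b) (hc : G.Adj v c)
    (hab : a ≠ b) (hac : a ≠ c) (hbc : b ≠ c) (haS : a ∈ S) (hbS : b ∈ S) (hcS : c ∈ S)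
    (hx : G.Adj v x) : x ∈ S := by
  have hx : x ∈ G.neighborSet v := hx
  rw [neighborSet_eq_of_ncard_eq_three hv ha hb hc hab hac hbc] at hx
  rcases hx with rfl | rfl | rfl <;> assumption

theorem eq_of_adj_of_ncard_neighborSet_eq_three {S : Set V} {v a b x y : V}
    (hv : (G.neighborSet v).ncard = 3) (ha : G.Adj v a) (hb : G.Adj v b) (hab : a ≠ b)
    (haS : a ∈ S) (hbS : b ∈ S) (hx : G.Adj v x) (hy : G.Adj v y) (hxS : x ∉ S)
    (hyS : y ∉ S) : x = y := by
  have hy : y ∈ G.neighborSet v := hy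
  rw [neighborSet_eq_of_ncard_eq_three hv ha hb hx hab (by rintro rfl; exact hxS haS)
    (by rintro rfl; exact hxS hbS)] at hy
  rcases hy with rfl | rfl | rfl
  exacts [(hyS haS).elim, (hyS hbS).elim, rfl]

theorem even_card_of_ncard_neighborSet_eq [Fintype V] {k : ℕ}
    (h : ∀ v, (G.neighborSet v).ncard = k) (hk : Odd k) : Even (Fintype.card V) := by
  classical
  have hsum := G.sum_degrees_eq_twice_card_edges
  have hdeg : ∀ v, G.degree v = k := fun v => by
    rw [← h v, ← card_neighborSet_eq_degree, Set.ncard_eq_toFinset_card', Set.toFinset_card]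
  simp only [hdeg, Finset.sum_const, Finset.card_univ, smul_eq_mul] at hsum
  have : Even (Fintype.card V * k) := ⟨_, hsum.trans (two_mul _)⟩
  exact (Nat.even_mul.mp this).resolve_right (Nat.not_even_iff_odd.mpr hk)

theorem Walk.isHamiltonianCycle_cons [DecidableEq V] {u v : V} (h : G.Adj u v)
    (p : G.Walk v u) (hp : p.IsPath) (hmem : ∀ w, w ∈ p.support) (hlen : 2 ≤ p.length) :
    (cons h p).IsHamiltonianCycle where
  toIsCycle := isCycle_iff_isPath_tail_and_le_length.mpr
    ⟨by simpa using hp, by simp; omega⟩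
  isHamiltonian_tail w := by simpa using hp.isHamiltonian_of_mem hmem w

theorem Walk.exists_support_eq_map {H : SimpleGraph W} (f : W → V) {s : Set W}
    (hf : ∀ x ∈ s, ∀ y ∈ s, H.Adj x y → G.Adj (f x) (f y)) :
    ∀ {x y : W} (r : H.Walk x y), (∀ w ∈ r.support, w ∈ s) →
      ∃ q : G.Walk (f x) (f y), q.support = r.support.map f
  | _, _, .nil, _ => ⟨.nil, rfl⟩
  | _, _, .cons h r, hr => by
    obtain ⟨q, hq⟩ := exists_support_eq_map f hf r fun w hw => hr w (by simp [hw])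
    exact ⟨.cons (hf _ (hr _ (by simp)) _ (hr _ (by simp)) h) q, by simp [hq]⟩

def HasHamiltonianPathOn (G : SimpleGraph V) (S : Set V) (a b : V) : Prop :=
  ∃ p : G.Walk a b, p.IsPath ∧ ∀ v, v ∈ p.support ↔ v ∈ S

theorem HasHamiltonianPathOn.symm {S : Set V} {a b : V} (h : G.HasHamiltonianPathOn S a b) :
    G.HasHamiltonianPathOn S b a :=
  let ⟨p, hp, hS⟩ := h
  ⟨p.reverse, hp.reverse, by simpa using hS⟩

theorem Walk.hasHamiltonianPathOn_of_perm {S : Set V} {l : List V} {a b : V} (p : G.Walk a b)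
    (hp : p.support.Perm l) (hl : l.Nodup) (hS : ∀ v, v ∈ l ↔ v ∈ S) :
    G.HasHamiltonianPathOn S a b :=
  ⟨p, (isPath_def p).mpr (hp.nodup_iff.mpr hl), fun v => hp.mem_iff.trans (hS v)⟩

theorem Walk.isHamiltonianCycle_cons_append_cons [DecidableEq V] {S : Set V} {a b c d : V}
    (hdb : G.Adj d b) (hac : G.Adj a c) {p : G.Walk b a} {q : G.Walk c d} (hp : p.IsPath)
    (hq : q.IsPath) (hpS : ∀ v, v ∈ p.support ↔ v ∈ S) (hqS : ∀ v, v ∈ q.support ↔ v ∈ Sᶜ)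
    (hcd : c ≠ d) : (cons hdb (p.append (cons hac q))).IsHamiltonianCycle := by
  refine isHamiltonianCycle_cons _ _ ?_ (fun v => ?_) ?_
  · rw [isPath_def, support_append, support_cons, List.tail_cons]
    exact List.nodup_append.mpr ⟨hp.support_nodup, hq.support_nodup,
      fun v hv w hw h => (hqS w).mp hw (h ▸ (hpS v).mp hv)⟩
  · simp only [support_append, support_cons, List.tail_cons, List.mem_append, hpS, hqS]
    exact em _
  · have : q.length ≠ 0 := fun h => hcd (q.eq_of_length_eq_zero h)
    simp only [length_append, length_cons]
    omega

theorem IsHamiltonian.exists_hasHamiltonianPathOn_compl_singleton [Fintype V] [DecidableEq V]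
    [Nontrivial V] (hG : G.IsHamiltonian) (z : V) :
    ∃ x y, G.Adj z x ∧ G.Adj z y ∧ x ≠ y ∧ G.HasHamiltonianPathOn {z}ᶜ x y := by
  obtain ⟨c, hc⟩ := hG.exists_isHamiltonianCycle z
  cases c with
  | nil => exact (hc.ne_nil rfl).elim
  | cons hzx t =>
    have ht : t.IsHamiltonian := fun w => by simpa using hc.isHamiltonian_tail w
    -- the cycle is `z, x, …, y, z`, and `r` is its part from `y` back to `x`
    obtain ⟨y, hzy, r, hr⟩ := Walk.exists_eq_cons_of_ne hzx.ne t.reverse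
    have hpath : (Walk.cons hzy r).IsPath := hr ▸ ht.isPath.reverse
    have hlen : 1 ≤ r.length := by
      have h3 := hc.three_le_length
      have := congrArg Walk.length hr
      simp only [Walk.length_reverse, Walk.length_cons] at h3 this
      omega
    refine ⟨y, _, hzy, hzx, ?_, r, hpath.of_cons, fun w => ⟨?_, fun hw => ?_⟩⟩
    · rintro rfl
      have := (Walk.isPath_iff_nil.mp hpath.of_cons).length_eq_zero
      omega
    · rintro hw rfl
      exact ((Walk.cons_isPath_iff _ _).mp hpath).2 hw
    · have hmem : w ∈ (Walk.cons hzy r).support := hr ▸ (by simpa using ht.mem_support w)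
      simpa [Set.mem_compl_singleton_iff.mp hw] using hmem

structure IsContraction (G : SimpleGraph V) (S : Set V) (φ : V → W) (H : SimpleGraph W) :
    Prop where
  surjective : Function.Surjective φ
  collapse : ∀ a ∈ S, ∀ b ∈ S, φ a = φ b
  eq_or_mem : ∀ a b, φ a = φ b → a = b ∨ (a ∈ S ∧ b ∈ S)
  adj_iff : ∀ x y, H.Adj x y ↔ ∃ a b, φ a = x ∧ φ b = y ∧ G.Adj a b ∧ ¬(a ∈ S ∧ b ∈ S)

namespace IsContraction

variable {S : Set V} {φ : V → W} {H : SimpleGraph W} {s a b : V}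

theorem map_eq_iff (hφ : IsContraction G S φ H) (hs : s ∈ S) : φ a = φ s ↔ a ∈ S :=
  ⟨fun h => ((hφ.eq_or_mem a s h).elim (· ▸ hs) And.left), fun ha => hφ.collapse a ha s hs⟩

theorem eq_of_map_eq (hφ : IsContraction G S φ H) (ha : a ∉ S) (h : φ a = φ b) : a = b :=
  (hφ.eq_or_mem a b h).resolve_right fun hab => ha hab.1

theorem surjInv_notMem (hφ : IsContraction G S φ H) (hs : s ∈ S) {w : W} (hw : w ≠ φ s) :
    Function.surjInv hφ.surjective w ∉ S := fun h =>
  hw (Function.surjInv_eq hφ.surjective w ▸ (hφ.map_eq_iff hs).mpr h)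

theorem surjInv_map (hφ : IsContraction G S φ H) (ha : a ∉ S) :
    Function.surjInv hφ.surjective (φ a) = a :=
  (hφ.eq_of_map_eq ha (Function.surjInv_eq hφ.surjective (φ a)).symm).symm

theorem adj_surjInv (hφ : IsContraction G S φ H) (hs : s ∈ S) {x y : W} (hx : x ≠ φ s)
    (hy : y ≠ φ s) (h : H.Adj x y) :
    G.Adj (Function.surjInv hφ.surjective x) (Function.surjInv hφ.surjective y) := by
  obtain ⟨a, b, rfl, rfl, hab, -⟩ := (hφ.adj_iff x y).mp h
  rwa [hφ.surjInv_map fun ha => hx ((hφ.map_eq_iff hs).mpr ha),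
    hφ.surjInv_map fun hb => hy ((hφ.map_eq_iff hs).mpr hb)]

theorem exists_adj_surjInv (hφ : IsContraction G S φ H) (hs : s ∈ S) {y : W}
    (h : H.Adj (φ s) y) : ∃ a ∈ S, G.Adj a (Function.surjInv hφ.surjective y) := by
  obtain ⟨a, b, ha, rfl, hab, hout⟩ := (hφ.adj_iff _ y).mp h
  have ha : a ∈ S := (hφ.map_eq_iff hs).mp ha
  exact ⟨a, ha, by rwa [hφ.surjInv_map fun hb => hout ⟨ha, hb⟩]⟩

theorem hasHamiltonianPathOn_compl (hφ : IsContraction G S φ H) (hs : s ∈ S) {x y : W}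
    (h : H.HasHamiltonianPathOn {φ s}ᶜ x y) :
    G.HasHamiltonianPathOn Sᶜ (Function.surjInv hφ.surjective x)
      (Function.surjInv hφ.surjective y) := by
  obtain ⟨r, hr, hrS⟩ := h
  obtain ⟨q, hq⟩ := r.exists_support_eq_map _ (s := {φ s}ᶜ)
    (fun _ hx _ hy => hφ.adj_surjInv hs hx hy) fun w hw => (hrS w).mp hw
  refine ⟨q, (Walk.isPath_def q).mpr (hq ▸ hr.support_nodup.map (Function.injective_surjInv _)),
    fun v => ?_⟩
  rw [hq, List.mem_map]
  constructor
  · rintro ⟨w, hw, rfl⟩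
    exact hφ.surjInv_notMem hs ((hrS w).mp hw)
  · intro hv
    exact ⟨φ v, (hrS _).mpr fun h => hv ((hφ.map_eq_iff hs).mp h), hφ.surjInv_map hv⟩

theorem isHamiltonian [Fintype V] [DecidableEq V] [Fintype W] [DecidableEq W]
    (hφ : IsContraction G S φ H) (hs : s ∈ S) {o : V} (ho : o ∉ S)
    (hpath : ∀ a ∈ S, ∀ b ∈ S, ∀ x y, x ∉ S → y ∉ S → x ≠ y → G.Adj a x → G.Adj b y →
      G.HasHamiltonianPathOn S a b)
    (hH : H.IsHamiltonian) : G.IsHamiltonian := by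
  have : Nontrivial W := ⟨⟨φ o, φ s, fun h => ho ((hφ.map_eq_iff hs).mp h)⟩⟩
  obtain ⟨x, y, hzx, hzy, hxy, hr⟩ := hH.exists_hasHamiltonianPathOn_compl_singleton (φ s)
  obtain ⟨q, hq, hqS⟩ := hφ.hasHamiltonianPathOn_compl hs hr
  obtain ⟨a, ha, hax⟩ := hφ.exists_adj_surjInv hs hzx
  obtain ⟨b, hb, hby⟩ := hφ.exists_adj_surjInv hs hzy
  have hxy' := (Function.injective_surjInv hφ.surjective).ne hxy
  obtain ⟨p, hp, hpS⟩ := hpath b hb a ha _ _ ((hqS _).mp q.end_mem_support)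
    ((hqS _).mp q.start_mem_support) hxy'.symm hby hax
  exact fun _ => ⟨_, _, Walk.isHamiltonianCycle_cons_append_cons hby.symm hax hp hq hpS hqS hxy'⟩

end IsContraction

structure ThreeQuadrangles (G : SimpleGraph V) (v1 v2 u3 u4 w3 w4 t : V) : Prop where
  nodup : [v1, v2, u3, u4, w3, w4, t].Nodup
  adj_v1_v2 : G.Adj v1 v2
  adj_v2_u3 : G.Adj v2 u3
  adj_u3_u4 : G.Adj u3 u4
  adj_u4_v1 : G.Adj u4 v1
  adj_v2_w3 : G.Adj v2 w3
  adj_w3_w4 : G.Adj w3 w4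
  adj_w4_v1 : G.Adj w4 v1
  adj_u3_t : G.Adj u3 t
  adj_t_w3 : G.Adj t w3

namespace ThreeQuadrangles

variable {v1 v2 u3 u4 w3 w4 t a x y : V}

/-- `IsHamiltonian` holds vacuously for a one-vertex graph, so the contracted graph needs a
second vertex; there is one because a cubic graph has an even number of vertices. -/
theorem exists_notMem [Fintype V] (hG : ∀ v, (G.neighborSet v).ncard = 3)
    (h : ThreeQuadrangles G v1 v2 u3 u4 w3 w4 t) :
    ∃ o, o ∉ ({v1, v2, u3, u4, w3, w4, t} : Set V) := by
  classical
  by_contra! hall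
  have hle := Finset.card_le_card fun v (_ : v ∈ Finset.univ) =>
    (by simpa using hall v : v ∈ [v1, v2, u3, u4, w3, w4, t].toFinset)
  have hge := h.nodup.length_le_card
  rw [List.toFinset_card_of_nodup h.nodup, Finset.card_univ] at hle
  have hcard : Fintype.card V = 7 := by
    simp only [List.length_cons, List.length_nil] at hle hge
    omega
  have := even_card_of_ncard_neighborSet_eq hG (by decide)
  rw [hcard] at this
  exact absurd this (by decide)

theorem eq_or_eq_or_eq_of_adj (hG : ∀ v, (G.neighborSet v).ncard = 3)
    (h : ThreeQuadrangles G v1 v2 u3 u4 w3 w4 t)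
    (ha : a ∈ ({v1, v2, u3, u4, w3, w4, t} : Set V))
    (hx : x ∉ ({v1, v2, u3, u4, w3, w4, t} : Set V)) (hax : G.Adj a x) :
    a = u4 ∨ a = w4 ∨ a = t := by
  have hd := h.nodup
  simp only [List.nodup_cons, List.mem_cons, List.not_mem_nil, or_false, not_or,
    List.nodup_nil, and_true] at hd
  simp only [Set.mem_insert_iff, Set.mem_singleton_iff] at ha
  rcases ha with rfl | rfl | rfl | rfl | rfl | rfl | rfl
  · exact (hx (mem_of_adj_of_ncard_neighborSet_eq_three (hG _) h.adj_v1_v2 h.adj_u4_v1.symm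
      h.adj_w4_v1.symm (by grind) (by grind) (by grind) (by simp) (by simp) (by simp) hax)).elim
  · exact (hx (mem_of_adj_of_ncard_neighborSet_eq_three (hG _) h.adj_v1_v2.symm h.adj_v2_u3
      h.adj_v2_w3 (by grind) (by grind) (by grind) (by simp) (by simp) (by simp) hax)).elim
  · exact (hx (mem_of_adj_of_ncard_neighborSet_eq_three (hG _) h.adj_v2_u3.symm h.adj_u3_u4
      h.adj_u3_t (by grind) (by grind) (by grind) (by simp) (by simp) (by simp) hax)).elim
  · exact Or.inl rfl
  · exact (hx (mem_of_adj_of_ncard_neighborSet_eq_three (hG _) h.adj_v2_w3.symm h.adj_w3_w4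
      h.adj_t_w3.symm (by grind) (by grind) (by grind) (by simp) (by simp) (by simp) hax)).elim
  · exact Or.inr (Or.inl rfl)
  · exact Or.inr (Or.inr rfl)

theorem eq_of_adj (hG : ∀ v, (G.neighborSet v).ncard = 3)
    (h : ThreeQuadrangles G v1 v2 u3 u4 w3 w4 t)
    (ha : a ∈ ({v1, v2, u3, u4, w3, w4, t} : Set V))
    (hx : x ∉ ({v1, v2, u3, u4, w3, w4, t} : Set V))
    (hy : y ∉ ({v1, v2, u3, u4, w3, w4, t} : Set V)) (hax : G.Adj a x) (hay : G.Adj a y) :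
    x = y := by
  have hd := h.nodup
  simp only [List.nodup_cons, List.mem_cons, List.not_mem_nil, or_false, not_or,
    List.nodup_nil, and_true] at hd
  simp only [Set.mem_insert_iff, Set.mem_singleton_iff] at ha
  rcases ha with rfl | rfl | rfl | rfl | rfl | rfl | rfl
  · exact eq_of_adj_of_ncard_neighborSet_eq_three (hG _) h.adj_v1_v2 h.adj_u4_v1.symm
      (by grind) (by simp) (by simp) hax hay hx hy
  · exact eq_of_adj_of_ncard_neighborSet_eq_three (hG _) h.adj_v1_v2.symm h.adj_v2_u3
      (by grind) (by simp) (by simp) hax hay hx hy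
  · exact eq_of_adj_of_ncard_neighborSet_eq_three (hG _) h.adj_v2_u3.symm h.adj_u3_u4
      (by grind) (by simp) (by simp) hax hay hx hy
  · exact eq_of_adj_of_ncard_neighborSet_eq_three (hG _) h.adj_u3_u4.symm h.adj_u4_v1
      (by grind) (by simp) (by simp) hax hay hx hy
  · exact eq_of_adj_of_ncard_neighborSet_eq_three (hG _) h.adj_v2_w3.symm h.adj_w3_w4
      (by grind) (by simp) (by simp) hax hay hx hy
  · exact eq_of_adj_of_ncard_neighborSet_eq_three (hG _) h.adj_w3_w4.symm h.adj_w4_v1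
      (by grind) (by simp) (by simp) hax hay hx hy
  · exact eq_of_adj_of_ncard_neighborSet_eq_three (hG _) h.adj_u3_t.symm h.adj_t_w3
      (by grind) (by simp) (by simp) hax hay hx hy

theorem hasHamiltonianPathOn_u4_w4_t (h : ThreeQuadrangles G v1 v2 u3 u4 w3 w4 t) :
    G.HasHamiltonianPathOn {v1, v2, u3, u4, w3, w4, t} u4 w4 ∧
      G.HasHamiltonianPathOn {v1, v2, u3, u4, w3, w4, t} u4 t ∧
      G.HasHamiltonianPathOn {v1, v2, u3, u4, w3, w4, t} w4 t := by
  classical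
  refine ⟨Walk.hasHamiltonianPathOn_of_perm (.cons h.adj_u3_u4.symm (.cons h.adj_u3_t
      (.cons h.adj_t_w3 (.cons h.adj_v2_w3.symm (.cons h.adj_v1_v2.symm
        (.cons h.adj_w4_v1.symm .nil)))))) ?_ h.nodup (by simp),
    Walk.hasHamiltonianPathOn_of_perm (.cons h.adj_u4_v1 (.cons h.adj_w4_v1.symm
      (.cons h.adj_w3_w4.symm (.cons h.adj_v2_w3.symm (.cons h.adj_v2_u3
        (.cons h.adj_u3_t .nil)))))) ?_ h.nodup (by simp),
    Walk.hasHamiltonianPathOn_of_perm (.cons h.adj_w4_v1 (.cons h.adj_u4_v1.symm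
      (.cons h.adj_u3_u4.symm (.cons h.adj_v2_u3.symm (.cons h.adj_v2_w3
        (.cons h.adj_t_w3.symm .nil)))))) ?_ h.nodup (by simp)⟩ <;>
  refine List.perm_iff_count.mpr fun _ => ?_ <;>
  simp only [Walk.support_cons, Walk.support_nil, List.count_cons, List.count_nil] <;>
  omega

theorem hasHamiltonianPathOn (hG : ∀ v, (G.neighborSet v).ncard = 3)
    (h : ThreeQuadrangles G v1 v2 u3 u4 w3 w4 t) :
    ∀ a ∈ ({v1, v2, u3, u4, w3, w4, t} : Set V), ∀ b ∈ ({v1, v2, u3, u4, w3, w4, t} : Set V),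
      ∀ x y, x ∉ ({v1, v2, u3, u4, w3, w4, t} : Set V) →
        y ∉ ({v1, v2, u3, u4, w3, w4, t} : Set V) → x ≠ y → G.Adj a x → G.Adj b y →
          G.HasHamiltonianPathOn {v1, v2, u3, u4, w3, w4, t} a b := by
  obtain ⟨hu4w4, hu4t, hw4t⟩ := h.hasHamiltonianPathOn_u4_w4_t
  intro a ha b hb x y hx hy hxy hax hby
  have hab : a ≠ b := by
    rintro rfl
    exact hxy (h.eq_of_adj hG ha hx hy hax hby)
  rcases h.eq_or_eq_or_eq_of_adj hG ha hx hax with rfl | rfl | rfl <;>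
    rcases h.eq_or_eq_or_eq_of_adj hG hb hy hby with rfl | rfl | rfl
  all_goals first
    | exact absurd rfl hab
    | assumption
    | exact HasHamiltonianPathOn.symm ‹_›

end ThreeQuadrangles

end SimpleGraph

namespace PlaneGraph

theorem threeQuadrangles_of_sides {V : Type} [Fintype V] [DecidableEq V] {P : PlaneGraph V}
    {v1 v2 u3 u4 w3 w4 t : V} {f1 f2 f3 : P.F}
    (hnodup : [v1, v2, u3, u4, w3, w4, t].Nodup)
    (hf1 : P.sides f1 = {s(v1, v2), s(v2, u3), s(u3, u4), s(u4, v1)})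
    (hf2 : P.sides f2 = {s(v1, v2), s(v2, w3), s(w3, w4), s(w4, v1)})
    (hf3 : P.sides f3 = {s(v2, u3), s(u3, t), s(t, w3), s(w3, v2)}) :
    ThreeQuadrangles P.G v1 v2 u3 u4 w3 w4 t := by
  have e1 := hf1 ▸ P.sides_sub f1
  have e2 := hf2 ▸ P.sides_sub f2
  have e3 := hf3 ▸ P.sides_sub f3
  simp only [Set.insert_subset_iff, Set.singleton_subset_iff, SimpleGraph.mem_edgeSet] at e1 e2 e3
  exact ⟨hnodup, e1.1, e1.2.1, e1.2.2.1, e1.2.2.2, e2.2.1, e2.2.2.1, e2.2.2.2, e3.2.1, e3.2.2.1⟩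

end PlaneGraph

theorem reduce_three_quadrangles_general
    {V W : Type} [Fintype V] [DecidableEq V] [Fintype W] [DecidableEq W]
    (P : PlaneGraph V) (hcubic : P.Cubic)
    (v1 v2 u3 u4 w3 w4 t : V)
    (hnodup : List.Nodup [v1, v2, u3, u4, w3, w4, t])
    (f1 f2 f3 : P.F)
    (hf1 : P.sides f1 = {s(v1, v2), s(v2, u3), s(u3, u4), s(u4, v1)})
    (hf2 : P.sides f2 = {s(v1, v2), s(v2, w3), s(w3, w4), s(w4, v1)})
    (hf3 : P.sides f3 = {s(v2, u3), s(u3, t), s(t, w3), s(w3, v2)})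
    (φ : V → W) (hφsurj : Function.Surjective φ)
    (hcollapse : ∀ a ∈ ({v1, v2, u3, u4, w3, w4, t} : Set V),
      ∀ b ∈ ({v1, v2, u3, u4, w3, w4, t} : Set V), φ a = φ b)
    (hinj : ∀ a b, φ a = φ b → a = b ∨
      (a ∈ ({v1, v2, u3, u4, w3, w4, t} : Set V) ∧
        b ∈ ({v1, v2, u3, u4, w3, w4, t} : Set V)))
    (G2 : SimpleGraph W)
    (hG2 : ∀ x y, G2.Adj x y ↔ ∃ a b, φ a = x ∧ φ b = y ∧ P.G.Adj a b ∧
      ¬(a ∈ ({v1, v2, u3, u4, w3, w4, t} : Set V) ∧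
        b ∈ ({v1, v2, u3, u4, w3, w4, t} : Set V))) :
    G2.IsHamiltonian → P.G.IsHamiltonian := by
  have hQ := PlaneGraph.threeQuadrangles_of_sides hnodup hf1 hf2 hf3
  obtain ⟨o, ho⟩ := hQ.exists_notMem hcubic
  exact IsContraction.isHamiltonian ⟨hφsurj, hcollapse, hinj, hG2⟩ (s := v1) (by simp) ho
    (hQ.hasHamiltonianPathOn hcubic)

/-- Let `G` be a 3-connected planar cubic graph containing three quadrangular
faces `f1 = v1v2u3u4`, `f2 = v1v2w3w4` (sharing the edge `v1v2`) and `f3 =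
v2u3tw3` (adjacent to both), the fourth surrounding face `f4` having size at
least 5. If `G2` is obtained by collapsing the union of `f1, f2, f3` to a
single vertex, then every Hamiltonian cycle of `G2` extends to a Hamiltonian
cycle of `G`. -/
theorem reduce_three_quadrangles
    {V W : Type} [Fintype V] [DecidableEq V] [Fintype W] [DecidableEq W]
    (P : PlaneGraph V) (h3 : P.G.KConnected 3) (hcubic : P.Cubic)
    (hfaces : ∀ f, P.size f ≤ 6)
    (v1 v2 u3 u4 w3 w4 t : V)
    (hnodup : List.Nodup [v1, v2, u3, u4, w3, w4, t])
    (f1 f2 f3 f4 : P.F)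
    (hf1 : P.sides f1 = {s(v1, v2), s(v2, u3), s(u3, u4), s(u4, v1)})
    (hf2 : P.sides f2 = {s(v1, v2), s(v2, w3), s(w3, w4), s(w4, v1)})
    (hf3 : P.sides f3 = {s(v2, u3), s(u3, t), s(t, w3), s(w3, v2)})
    (hf4 : (∃ e ∈ P.sides f4, u4 ∈ e) ∧ (∃ e ∈ P.sides f4, w4 ∈ e) ∧
      f4 ≠ f1 ∧ f4 ≠ f2 ∧ f4 ≠ f3)
    (hs4 : 5 ≤ P.size f4)
    (φ : V → W) (hφsurj : Function.Surjective φ)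
    (hcollapse : ∀ a ∈ ({v1, v2, u3, u4, w3, w4, t} : Set V),
      ∀ b ∈ ({v1, v2, u3, u4, w3, w4, t} : Set V), φ a = φ b)
    (hinj : ∀ a b, φ a = φ b → a = b ∨
      (a ∈ ({v1, v2, u3, u4, w3, w4, t} : Set V) ∧
        b ∈ ({v1, v2, u3, u4, w3, w4, t} : Set V)))
    (G2 : SimpleGraph W)
    (hG2 : ∀ x y, G2.Adj x y ↔ ∃ a b, φ a = x ∧ φ b = y ∧ P.G.Adj a b ∧
      ¬(a ∈ ({v1, v2, u3, u4, w3, w4, t} : Set V) ∧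
        b ∈ ({v1, v2, u3, u4, w3, w4, t} : Set V))) :
    G2.IsHamiltonian → P.G.IsHamiltonian :=
  reduce_three_quadrangles_general P hcubic v1 v2 u3 u4 w3 w4 t hnodup f1 f2 f3 hf1 hf2 hf3 φ hφsurj
    hcollapse hinj G2 hG2
end
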